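/- Consider the two-step-size restarted subgradient algorithm with constants ε̄' := 0.9, ε := ε'/(1+ε'), ε̄ := ε̄'/(1+ε̄'), B := 1/√e, F := √e, where each inner iteration computes two iterates (one for each of the two simultaneous subgradient sequences). Then there exist an outer index i ≥ 1 and an inner index j with 0 ≤ j ≤ K_i such that the total number of iterates computed prior to and including x_{i,j}, namely 2(Σ_{i'=1}^{i−1} K_{i'} + j), does not exceed 18 M² G² ( 2.7 ln(1 + (f(x⁰) − f*)/(f* − f_slb)) + ((1+ε')/ε')² ), and (f(x_{i,j}) − f*)/(f* − f_slb) ≤ ε'. -/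

import Mathlib

open scoped RealInnerProductSpace Classical

/-- `p` is the Euclidean projection of `u` onto `Q`. -/
def IsProj {n : ℕ} (Q : Set (EuclideanSpace ℝ (Fin n)))
    (u p : EuclideanSpace ℝ (Fin n)) : Prop :=
  p ∈ Q ∧ ∀ w ∈ Q, dist p u ≤ dist w u

/-! Every inner step of either sequence is a projected subgradient step `y ↦ Π_Q(y - (h/‖g‖²) g)`.
As long as `2 (f(y_j) - f*) - h ≥ m > 0`, each step lowers `M² ‖y_j - z‖²` by at least `h m`
for every minimiser `z`, so by the growth condition an inner loop lasts at most
`M² G² (f(y_0) - f_slb)² / (h m)` steps. A restart divides the gap `D_i := f(x_{i,0}) - f_slb`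
by more than `√e`. While `D_i ≥ e^{3/2} (1 + ε') (f* - f_slb)`, the `ε̄`-sequence forces a
restart within `7.5 M² G²` steps, and this can happen at most `2 ln(D_1 / (f* - f_slb))` times.
From then on, at most three outer iterations of at most `e M² G² ((1 + ε') / ε')²` steps of
the `ε`-sequence each lead to an iterate with `f - f* ≤ ε' (f* - f_slb)`. -/

theorem le_mul_infDist_sq {E : Type*} [PseudoMetricSpace E] {S : Set E} {x : E} {a c : ℝ}
    (hS : S.Nonempty) (ha : 0 ≤ a) (h : ∀ z ∈ S, c ≤ a * dist x z ^ 2) :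
    c ≤ a * Metric.infDist x S ^ 2 := by
  rcases le_or_gt c 0 with hc | hc
  · exact hc.trans (by positivity)
  obtain ⟨z, hz⟩ := hS
  have ha : 0 < a := pos_of_mul_pos_left (hc.trans_le (h z hz)) (sq_nonneg _)
  have hsqrt : √(c / a) ≤ Metric.infDist x S := by
    refine (Metric.le_infDist ⟨z, hz⟩).2 fun w hw => Real.sqrt_le_iff.2 ⟨dist_nonneg, ?_⟩
    rw [div_le_iff₀ ha, mul_comm]
    exact h w hw
  have := pow_le_pow_left₀ (Real.sqrt_nonneg _) hsqrt 2
  rwa [Real.sq_sqrt (by positivity), div_le_iff₀ ha, mul_comm] at this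

section Projection

variable {n : ℕ} {Q : Set (EuclideanSpace ℝ (Fin n))} {u p w : EuclideanSpace ℝ (Fin n)}

theorem IsProj.inner_sub_le_zero (hQ : Convex ℝ Q) (hp : IsProj Q u p) (hw : w ∈ Q) :
    ⟪u - p, w - p⟫ ≤ 0 := by
  have : Nonempty Q := ⟨⟨p, hp.1⟩⟩
  refine (norm_eq_iInf_iff_real_inner_le_zero hQ hp.1).1 (le_antisymm ?_ ?_) w hw
  · refine le_ciInf fun w => ?_
    rw [← dist_eq_norm, ← dist_eq_norm, dist_comm u, dist_comm u]
    exact hp.2 w w.2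
  · exact ciInf_le (f := fun w : Q => ‖u - w‖) ⟨0, Set.forall_mem_range.2 fun _ => norm_nonneg _⟩
      ⟨p, hp.1⟩

theorem IsProj.norm_sub_le (hQ : Convex ℝ Q) (hp : IsProj Q u p) (hw : w ∈ Q) :
    ‖p - w‖ ≤ ‖u - w‖ := by
  have hobtuse := hp.inner_sub_le_zero hQ hw
  have hexpand : ‖u - w‖ ^ 2 = ‖u - p‖ ^ 2 - 2 * ⟪u - p, w - p⟫ + ‖p - w‖ ^ 2 := by
    rw [← sub_add_sub_cancel u p w, norm_add_sq_real, ← neg_sub w p, inner_neg_right]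
    ring
  exact (pow_le_pow_iff_left₀ (norm_nonneg _) (norm_nonneg _) two_ne_zero).1
    (by nlinarith [sq_nonneg ‖u - p‖])

theorem IsProj.sq_norm_sub_le_of_subgradient {f : EuclideanSpace ℝ (Fin n) → ℝ}
    {y g z : EuclideanSpace ℝ (Fin n)} {a : ℝ} (hQ : Convex ℝ Q) (ha : 0 ≤ a) (hz : z ∈ Q)
    (hp : IsProj Q (y - a • g) p) (hg : f y + ⟪g, z - y⟫ ≤ f z) :
    ‖p - z‖ ^ 2 ≤ ‖y - z‖ ^ 2 - 2 * a * (f y - f z) + a ^ 2 * ‖g‖ ^ 2 := by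
  have hexpand : ‖y - a • g - z‖ ^ 2 = ‖y - z‖ ^ 2 - 2 * a * ⟪g, y - z⟫ + a ^ 2 * ‖g‖ ^ 2 := by
    rw [sub_right_comm, norm_sub_sq_real, real_inner_smul_right, norm_smul, mul_pow,
      Real.norm_eq_abs, sq_abs, real_inner_comm]
    ring
  have hsub : f y - f z ≤ ⟪g, y - z⟫ := by
    rw [← neg_sub z y, inner_neg_right]; linarith
  have hproj := pow_le_pow_left₀ (norm_nonneg _) (hp.norm_sub_le hQ hz) 2
  nlinarith [mul_le_mul_of_nonneg_left hsub ha]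

end Projection

/-- The step size `ε (f(x_{i,0}) - f_slb) / (F ‖g‖²)` of the method is `h / ‖g‖²` with
`h = ε (f(x_{i,0}) - f_slb) / F`. -/
def IsSubgradientStep {n : ℕ} (Q : Set (EuclideanSpace ℝ (Fin n)))
    (f : EuclideanSpace ℝ (Fin n) → ℝ) (M h : ℝ) (y g y' : EuclideanSpace ℝ (Fin n)) : Prop :=
  (∀ w ∈ Q, f y + ⟪g, w - y⟫ ≤ f w) ∧ ‖g‖ ≤ M ∧
    IsProj Q (y - (if g = 0 then 0 else h / ‖g‖ ^ 2) • g) y'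

theorem isSubgradientStep_of_isProj {n : ℕ} {Q : Set (EuclideanSpace ℝ (Fin n))}
    {f : EuclideanSpace ℝ (Fin n) → ℝ} {M a F : ℝ} {y g y' : EuclideanSpace ℝ (Fin n)}
    (hsub : ∀ w ∈ Q, f y + ⟪g, w - y⟫ ≤ f w) (hM : ‖g‖ ≤ M)
    (hp : IsProj Q (y - (if g = 0 then 0 else a / (F * ‖g‖ ^ 2)) • g) y') :
    IsSubgradientStep Q f M (a / F) y g y' :=
  ⟨hsub, hM, by simpa only [div_div] using hp⟩

section SubgradientSteps

variable {n : ℕ} {Q : Set (EuclideanSpace ℝ (Fin n))} {f : EuclideanSpace ℝ (Fin n) → ℝ}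
  {M h m : ℝ}

/-- The step `h / ‖g‖²` makes `‖y - z‖²` drop by at least `h m / ‖g‖² ≥ h m / M²`. -/
theorem IsSubgradientStep.sq_mul_norm_sub_sq_add_le {y g y' z : EuclideanSpace ℝ (Fin n)}
    (hQ : Convex ℝ Q) (hstep : IsSubgradientStep Q f M h y g y') (hh : 0 < h) (hm : 0 ≤ m)
    (hz : z ∈ Q) (hmargin : m ≤ 2 * (f y - f z) - h) :
    M ^ 2 * ‖y' - z‖ ^ 2 + h * m ≤ M ^ 2 * ‖y - z‖ ^ 2 := by
  obtain ⟨hsub, hgM, hproj⟩ := hstep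
  by_cases hg : g = 0
  · have := hsub z hz
    simp only [hg, inner_zero_left] at this
    linarith
  rw [if_neg hg] at hproj
  have hg2 : 0 < ‖g‖ ^ 2 := by positivity
  set a := h / ‖g‖ ^ 2
  have ha : a * ‖g‖ ^ 2 = h := div_mul_cancel₀ h hg2.ne'
  have hdecr : ‖y' - z‖ ^ 2 ≤ ‖y - z‖ ^ 2 - a * m := by
    have := hproj.sq_norm_sub_le_of_subgradient hQ (by positivity) hz (hsub z hz)
    nlinarith [mul_le_mul_of_nonneg_left hmargin (div_pos hh hg2).le]
  have hgM2 : ‖g‖ ^ 2 ≤ M ^ 2 := pow_le_pow_left₀ (norm_nonneg g) hgM 2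
  have ham : 0 ≤ a * m := mul_nonneg (div_pos hh hg2).le hm
  nlinarith [mul_le_mul_of_nonneg_right hgM2 ham]

variable {fstar fslb G : ℝ} {y g : ℕ → EuclideanSpace ℝ (Fin n)}

theorem natCast_mul_add_le_of_isSubgradientStep {z : EuclideanSpace ℝ (Fin n)} (hQ : Convex ℝ Q)
    (hh : 0 < h) (hm : 0 ≤ m) (hz : z ∈ Q) :
    ∀ N : ℕ, (∀ j < N, IsSubgradientStep Q f M h (y j) (g j) (y (j + 1))) →
      (∀ j < N, m ≤ 2 * (f (y j) - f z) - h) →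
      N * (h * m) + M ^ 2 * ‖y N - z‖ ^ 2 ≤ M ^ 2 * ‖y 0 - z‖ ^ 2
  | 0, _, _ => by simp
  | N + 1, hstep, hmargin => by
    have ih := natCast_mul_add_le_of_isSubgradientStep hQ hh hm hz N
      (fun j hj => hstep j (by omega)) (fun j hj => hmargin j (by omega))
    have := (hstep N N.lt_succ_self).sq_mul_norm_sub_sq_add_le hQ hh hm hz
      (hmargin N N.lt_succ_self)
    push_cast
    linarith

theorem natCast_mul_le_of_isSubgradientStep (hQ : Convex ℝ Q) (hOpt : ∃ z ∈ Q, f z = fstar)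
    (hgrow : ∀ z ∈ Q, Metric.infDist z {w ∈ Q | f w = fstar} ≤ G * (f z - fslb))
    (hh : 0 < h) (hm : 0 ≤ m) (hy0 : y 0 ∈ Q) (N : ℕ)
    (hstep : ∀ j < N, IsSubgradientStep Q f M h (y j) (g j) (y (j + 1)))
    (hmargin : ∀ j < N, m ≤ 2 * (f (y j) - fstar) - h) :
    N * (h * m) ≤ M ^ 2 * G ^ 2 * (f (y 0) - fslb) ^ 2 := by
  obtain ⟨z₀, hz₀Q, hz₀⟩ := hOpt
  have hdist : N * (h * m) ≤ M ^ 2 * Metric.infDist (y 0) {w ∈ Q | f w = fstar} ^ 2 := by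
    refine le_mul_infDist_sq ⟨z₀, hz₀Q, hz₀⟩ (sq_nonneg M) fun z ⟨hzQ, hz⟩ => ?_
    have := natCast_mul_add_le_of_isSubgradientStep hQ hh hm hzQ N hstep (hz ▸ hmargin)
    rw [dist_eq_norm]
    nlinarith [sq_nonneg M, sq_nonneg ‖y N - z‖]
  have hgrow₀ := pow_le_pow_left₀ Metric.infDist_nonneg (hgrow _ hy0) 2
  rw [mul_pow] at hgrow₀
  nlinarith [sq_nonneg M]

theorem exists_eq_natCast_of_isSubgradientStep {K : ℕ∞} (hQ : Convex ℝ Q)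
    (hOpt : ∃ z ∈ Q, f z = fstar)
    (hgrow : ∀ z ∈ Q, Metric.infDist z {w ∈ Q | f w = fstar} ≤ G * (f z - fslb))
    (hh : 0 < h) (hm : 0 < m) (hy0 : y 0 ∈ Q)
    (hstep : ∀ j : ℕ, (j : ℕ∞) < K → IsSubgradientStep Q f M h (y j) (g j) (y (j + 1)))
    (hmargin : ∀ j : ℕ, (j : ℕ∞) < K → m ≤ 2 * (f (y j) - fstar) - h) :
    ∃ k : ℕ, K = k ∧ k * (h * m) ≤ M ^ 2 * G ^ 2 * (f (y 0) - fslb) ^ 2 := by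
  have hbound (N : ℕ) (hN : (N : ℕ∞) ≤ K) :
      N * (h * m) ≤ M ^ 2 * G ^ 2 * (f (y 0) - fslb) ^ 2 :=
    natCast_mul_le_of_isSubgradientStep hQ hOpt hgrow hh hm.le hy0 N
      (fun j hj => hstep j ((Nat.cast_lt.2 hj).trans_le hN))
      (fun j hj => hmargin j ((Nat.cast_lt.2 hj).trans_le hN))
  have hK : K ≠ ⊤ := by
    rintro rfl
    obtain ⟨N, hN⟩ := exists_nat_gt (M ^ 2 * G ^ 2 * (f (y 0) - fslb) ^ 2 / (h * m))
    have := hbound N le_top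
    rw [div_lt_iff₀ (by positivity)] at hN
    linarith
  exact ⟨K.toNat, (ENat.natCast_toNat hK).symm, hbound _ (ENat.natCast_toNat_le_self K)⟩

end SubgradientSteps

section InnerLoop

variable {n : ℕ} {Q : Set (EuclideanSpace ℝ (Fin n))} {f : EuclideanSpace ℝ (Fin n) → ℝ}
  {fstar fslb G M s c : ℝ} {y g : ℕ → EuclideanSpace ℝ (Fin n)} {K : ℕ∞}

theorem innerLoop_length_le_of_pow_three_mul_le (hQ : Convex ℝ Q)
    (hOpt : ∃ z ∈ Q, f z = fstar)
    (hgrow : ∀ z ∈ Q, Metric.infDist z {w ∈ Q | f w = fstar} ≤ G * (f z - fslb))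
    (hy0 : y 0 ∈ Q)
    (hstep : ∀ j : ℕ, (j : ℕ∞) < K →
      IsSubgradientStep Q f M (c * (f (y 0) - fslb) / s) (y j) (g j) (y (j + 1)))
    (hratio : ∀ j : ℕ, (j : ℕ∞) < K → s⁻¹ ≤ (f (y j) - fslb) / (f (y 0) - fslb))
    (hs : 0 < s) (hs2 : s ^ 2 = Real.exp 1) (hc : c = 9 / 19) (hslb : fslb < fstar)
    (hD : s ^ 3 * (fstar - fslb) ≤ f (y 0) - fslb) :
    ∃ k : ℕ, K = k ∧ (k : ℝ) ≤ 15 / 2 * M ^ 2 * G ^ 2 := by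
  set D := f (y 0) - fslb
  set δ := fstar - fslb with hδdef
  have hδ : 0 < δ := sub_pos.2 hslb
  have hDpos : 0 < D := lt_of_lt_of_le (by positivity) hD
  set t := D / s
  have hts : t * s = D := div_mul_cancel₀ D hs.ne'
  have hlow (j : ℕ) (hj : (j : ℕ∞) < K) : t ≤ f (y j) - fslb := by
    simpa only [le_div_iff₀ hDpos, inv_mul_eq_div] using hratio j hj
  have hh : c * D / s = 9 / 19 * t := by rw [hc, mul_div_assoc]
  have hδt : δ * Real.exp 1 ≤ t := by
    rw [← hs2]; nlinarith [mul_le_mul_of_nonneg_left hD hs.le]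
  set m := 2 * (t - δ) - 9 / 19 * t with hmdef
  have hkey : 2 / 15 * D ^ 2 ≤ (c * D / s) * m := by
    have he : 0 < Real.exp 1 := Real.exp_pos 1
    -- the source of the constant `15 / 2`: `(9/19) e⁻¹ (29/19 - 2 e⁻¹) ≥ 2/15`
    have hq : 2 / 15 * Real.exp 1 ^ 2 ≤ 9 / 19 * (29 / 19 * Real.exp 1 - 2) := by
      nlinarith [Real.exp_one_gt_d9, Real.exp_one_lt_d9]
    have ht : 0 ≤ t := by positivity
    have hD2 : D ^ 2 = Real.exp 1 * t ^ 2 := by rw [← hts, ← hs2]; ring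
    rw [hh, hD2]
    refine le_of_mul_le_mul_left ?_ he
    calc Real.exp 1 * (2 / 15 * (Real.exp 1 * t ^ 2)) = t ^ 2 * (2 / 15 * Real.exp 1 ^ 2) := by
          ring
      _ ≤ t ^ 2 * (9 / 19 * (29 / 19 * Real.exp 1 - 2)) := by gcongr
      _ ≤ Real.exp 1 * (9 / 19 * t * m) := by
          rw [hmdef]; nlinarith [mul_le_mul_of_nonneg_left hδt ht]
  have hhpos : 0 < c * D / s := by rw [hh]; positivity
  have hm : 0 < m := pos_of_mul_pos_right (lt_of_lt_of_le (by positivity) hkey) hhpos.le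
  obtain ⟨k, hK, hk⟩ := exists_eq_natCast_of_isSubgradientStep hQ hOpt hgrow hhpos hm hy0
    hstep fun j hj => by linarith [hlow j hj, hh, hmdef, hδdef]
  refine ⟨k, hK, le_of_mul_le_mul_right (a := 2 / 15 * D ^ 2) ?_ (by positivity)⟩
  nlinarith [mul_le_mul_of_nonneg_left hkey k.cast_nonneg]

theorem innerLoop_length_le_of_mul_lt (hQ : Convex ℝ Q)
    (hOpt : ∃ z ∈ Q, f z = fstar)
    (hgrow : ∀ z ∈ Q, Metric.infDist z {w ∈ Q | f w = fstar} ≤ G * (f z - fslb))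
    (hy0 : y 0 ∈ Q)
    (hstep : ∀ j : ℕ, (j : ℕ∞) < K →
      IsSubgradientStep Q f M (c * (f (y 0) - fslb) / s) (y j) (g j) (y (j + 1)))
    (hratio : ∀ j : ℕ, (j : ℕ∞) < K → s⁻¹ ≤ (f (y j) - fslb) / (f (y 0) - fslb))
    {ε' : ℝ} (hs : 0 < s) (hs2 : s ^ 2 = Real.exp 1) (hε' : 0 < ε') (hc : c = ε' / (1 + ε'))
    (hslb : fslb < fstar) (hD : (1 + ε') * s * (fstar - fslb) < f (y 0) - fslb) :
    ∃ k : ℕ, K = k ∧ (k : ℝ) ≤ Real.exp 1 * M ^ 2 * G ^ 2 * ((1 + ε') / ε') ^ 2 := by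
  set D := f (y 0) - fslb
  set δ := fstar - fslb with hδdef
  have hDpos : 0 < D := lt_of_lt_of_le (by positivity) hD.le
  set t := D / s
  have hts : t * s = D := div_mul_cancel₀ D hs.ne'
  have hlow (j : ℕ) (hj : (j : ℕ∞) < K) : t ≤ f (y j) - fslb := by
    simpa only [le_div_iff₀ hDpos, inv_mul_eq_div] using hratio j hj
  have hh : c * D / s = ε' / (1 + ε') * t := by rw [hc, mul_div_assoc]
  have hδt : (1 + ε') * δ < t := by
    rw [lt_div_iff₀ hs]; linarith
  have hhpos : 0 < c * D / s := by rw [hh]; positivity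
  have hmargin : c * D / s ≤ t - δ := by
    rw [hh, ← sub_nonneg]
    have : t - δ - ε' / (1 + ε') * t = (t - (1 + ε') * δ) / (1 + ε') := by field_simp; ring
    rw [this]; exact div_nonneg (by linarith) (by positivity)
  obtain ⟨k, hK, hk⟩ := exists_eq_natCast_of_isSubgradientStep hQ hOpt hgrow hhpos hhpos hy0
    hstep fun j hj => by linarith [hlow j hj, hδdef]
  have hJ : Real.exp 1 * M ^ 2 * G ^ 2 * ((1 + ε') / ε') ^ 2 * ((c * D / s) * (c * D / s))
      = M ^ 2 * G ^ 2 * D ^ 2 := by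
    rw [hh, ← hts, ← hs2]; field_simp
  refine ⟨k, hK, le_of_mul_le_mul_right (a := (c * D / s) * (c * D / s)) ?_ (by positivity)⟩
  rw [hJ]; exact hk

theorem innerLoop_hit_or_restart_of_le_mul (hQ : Convex ℝ Q)
    (hOpt : ∃ z ∈ Q, f z = fstar)
    (hgrow : ∀ z ∈ Q, Metric.infDist z {w ∈ Q | f w = fstar} ≤ G * (f z - fslb))
    (hy0 : y 0 ∈ Q)
    (hstep : ∀ j : ℕ, (j : ℕ∞) < K →
      IsSubgradientStep Q f M (c * (f (y 0) - fslb) / s) (y j) (g j) (y (j + 1)))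
    {ε' : ℝ} (hs : 0 < s) (hs2 : s ^ 2 = Real.exp 1) (hε' : 0 < ε') (hc : c = ε' / (1 + ε'))
    (hD₀ : 0 < f (y 0) - fslb) (hD : f (y 0) - fslb ≤ (1 + ε') * s * (fstar - fslb)) :
    ∃ j : ℕ, (j : ℕ∞) ≤ K ∧ (j : ℝ) ≤ Real.exp 1 * M ^ 2 * G ^ 2 * ((1 + ε') / ε') ^ 2 ∧
      (f (y j) - fstar ≤ ε' * (fstar - fslb) ∨ K = j) := by
  set D := f (y 0) - fslb
  set δ := fstar - fslb
  set J := Real.exp 1 * M ^ 2 * G ^ 2 * ((1 + ε') / ε') ^ 2 with hJdef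
  have hJ : 0 ≤ J := by positivity
  have hδ : 0 < δ := pos_of_mul_pos_right (hD₀.trans_le hD) (by positivity)
  by_cases hK : K ≤ ⌊J⌋₊
  · have hKfin : K ≠ ⊤ := ne_top_of_le_ne_top (ENat.natCast_ne_top _) hK
    refine ⟨K.toNat, ENat.natCast_toNat_le_self K, ?_, Or.inr (ENat.natCast_toNat hKfin).symm⟩
    have : K.toNat ≤ ⌊J⌋₊ := by
      rw [← ENat.natCast_toNat hKfin] at hK; exact_mod_cast hK
    exact (Nat.cast_le.2 this).trans (Nat.floor_le hJ)
  by_contra! hfail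
  rw [not_le] at hK
  have hjK (j : ℕ) (hj : j < ⌊J⌋₊ + 1) : (j : ℕ∞) < K :=
    lt_of_le_of_lt (Nat.cast_le.2 (Nat.lt_succ_iff.1 hj)) hK
  have hjJ (j : ℕ) (hj : j < ⌊J⌋₊ + 1) : (j : ℝ) ≤ J :=
    (Nat.cast_le.2 (Nat.lt_succ_iff.1 hj)).trans (Nat.floor_le hJ)
  have hh : c * D / s = ε' * D / ((1 + ε') * s) := by rw [hc]; field_simp
  have hhpos : 0 < c * D / s := by rw [hh]; positivity
  have hhle : c * D / s ≤ ε' * δ := by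
    rw [hh, div_le_iff₀ (by positivity)]; nlinarith
  have hcount := natCast_mul_le_of_isSubgradientStep hQ hOpt hgrow hhpos
    (by positivity : 0 ≤ ε' * δ) hy0 (⌊J⌋₊ + 1) (fun j hj => hstep j (hjK j hj))
    fun j hj => by linarith [(hfail j (hjK j hj).le (hjJ j hj)).1]
  have hJh : M ^ 2 * G ^ 2 * D ^ 2 ≤ J * (c * D / s * (ε' * δ)) := by
    have : J * (c * D / s * (ε' * δ)) = M ^ 2 * G ^ 2 * ((1 + ε') * s * δ) * D := by
      rw [hJdef, hh, ← hs2]; field_simp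
    rw [this, mul_assoc (M ^ 2 * G ^ 2), pow_two D]
    exact mul_le_mul_of_nonneg_left (mul_le_mul_of_nonneg_right hD hD₀.le) (by positivity)
  have := le_of_mul_le_mul_right (hcount.trans hJh) (by positivity)
  push_cast at this
  linarith [Nat.lt_floor_add_one J]

end InnerLoop

/-- From outer iteration `i` on, restarting whenever an inner loop of length `K l` ends, an
inner iterate `(i', j)` with `P i' j` is reached after at most `c` inner iterations. -/
def SucceedsWithin (K : ℕ → ℕ∞) (P : ℕ → ℕ → Prop) (i : ℕ) (c : ℝ) : Prop :=
  ∃ i' j : ℕ, i ≤ i' ∧ (j : ℕ∞) ≤ K i' ∧ (∀ l ∈ Finset.Ico i i', K l ≠ ⊤) ∧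
    (((∑ l ∈ Finset.Ico i i', (K l).toNat) + j : ℕ) : ℝ) ≤ c ∧ P i' j

namespace SucceedsWithin

variable {K : ℕ → ℕ∞} {P : ℕ → ℕ → Prop} {i : ℕ} {c : ℝ}

theorem mono {c' : ℝ} (h : SucceedsWithin K P i c) (hc : c ≤ c') : SucceedsWithin K P i c' :=
  let ⟨i', j, hi, hj, hfin, hsum, hP⟩ := h
  ⟨i', j, hi, hj, hfin, hsum.trans hc, hP⟩

theorem of_le {j : ℕ} (hj : (j : ℕ∞) ≤ K i) (hP : P i j) : SucceedsWithin K P i j :=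
  ⟨i, j, le_rfl, hj, by simp, by simp, hP⟩

theorem of_restart {k : ℕ} (hK : K i = k) (h : SucceedsWithin K P (i + 1) c) :
    SucceedsWithin K P i (k + c) := by
  obtain ⟨i', j, hi, hj, hfin, hsum, hP⟩ := h
  have hsplit := Finset.sum_eq_sum_Ico_succ_bot (show i < i' by omega) fun l => (K l).toNat
  refine ⟨i', j, by omega, hj, fun l hl => ?_, ?_, hP⟩
  · rcases eq_or_ne l i with rfl | hli
    · exact hK ▸ ENat.natCast_ne_top k
    · exact hfin l (Finset.mem_Ico.2 ⟨by grind, (Finset.mem_Ico.1 hl).2⟩)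
  · rw [hsplit, hK, ENat.toNat_natCast]
    push_cast at hsum ⊢
    linarith

end SucceedsWithin

theorem lt_sqrt_exp_one_pow {r : ℝ} (hr : 0 < r) :
    r < Real.sqrt (Real.exp 1) ^ (⌊2 * Real.log r⌋₊ + 1) := by
  rw [← Real.exp_half, ← Real.exp_nat_mul]
  refine (Real.exp_log hr).symm.trans_lt (Real.exp_lt_exp.2 ?_)
  have := Nat.lt_floor_add_one (2 * Real.log r)
  push_cast
  linarith

/-- Bookkeeping of a restarted method: `R i` is an invariant of the outer iterations that are
reached, `D i` the gap at the start of outer iteration `i`, `K i` the length of its inner loop and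
`P i j` the target property of its inner iterate `j`; a restart shrinks the gap by the factor `s`,
and below the gap `τ` the first iterate is on target. -/
structure RestartEstimates (K : ℕ → ℕ∞) (P : ℕ → ℕ → Prop) (R : ℕ → Prop) (D : ℕ → ℝ)
    (s τ CA J : ℝ) : Prop where
  restart : ∀ i (k : ℕ), R i → K i = k → R (i + 1) ∧ s * D (i + 1) < D i
  fast : ∀ i, R i → s ^ 3 * τ ≤ D i → ∃ k : ℕ, K i = k ∧ (k : ℝ) ≤ CA
  far : ∀ i, R i → s * τ < D i → ∃ k : ℕ, K i = k ∧ (k : ℝ) ≤ J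
  near : ∀ i, R i → D i ≤ s * τ → ∃ j : ℕ, (j : ℕ∞) ≤ K i ∧ (j : ℝ) ≤ J ∧ (P i j ∨ K i = j)
  done : ∀ i, R i → D i ≤ τ → P i 0

namespace RestartEstimates

variable {K : ℕ → ℕ∞} {P : ℕ → ℕ → Prop} {R : ℕ → Prop} {D : ℕ → ℝ} {s τ CA J : ℝ}

theorem succeedsWithin_of_le_pow_succ_mul (h : RestartEstimates K P R D s τ CA J) (hs : 0 < s)
    (hJ : 0 ≤ J) : ∀ (k i : ℕ), R i → D i ≤ s ^ (k + 1) * τ →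
      SucceedsWithin K P i ((k + 1) * J) := by
  have hbase (i : ℕ) (hR : R i) (hD : D i ≤ s * τ) : SucceedsWithin K P i J := by
    obtain ⟨j, hjK, hjJ, hP | hK⟩ := h.near i hR hD
    · exact (SucceedsWithin.of_le hjK hP).mono hjJ
    · obtain ⟨hR', hdrop⟩ := h.restart i j hR hK
      have hτ : D (i + 1) ≤ τ := le_of_mul_le_mul_left (by linarith) hs
      refine ((SucceedsWithin.of_le (by simp) (h.done _ hR' hτ)).of_restart hK).mono ?_
      simpa using hjJ
  intro k
  induction k with
  | zero => intro i hR hD; simpa using hbase i hR (by simpa using hD)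
  | succ k ih =>
    intro i hR hD
    by_cases hnear : D i ≤ s * τ
    · exact (hbase i hR hnear).mono (by push_cast; nlinarith)
    obtain ⟨k', hK, hk'⟩ := h.far i hR (not_le.1 hnear)
    obtain ⟨hR', hdrop⟩ := h.restart i k' hR hK
    have hD' : D (i + 1) ≤ s ^ (k + 1) * τ :=
      le_of_mul_le_mul_left (by rw [pow_succ] at hD; linarith) hs
    exact ((ih _ hR' hD').of_restart hK).mono (by push_cast; linarith)

theorem succeedsWithin_of_lt_pow_add_three_mul (h : RestartEstimates K P R D s τ CA J)
    (hs : 0 < s) (hCA : 0 ≤ CA) (hJ : 0 ≤ J) : ∀ (N i : ℕ), R i → D i < s ^ (N + 3) * τ →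
      SucceedsWithin K P i (N * CA + 3 * J) := by
  have hfinal (i : ℕ) (hR : R i) (hD : D i < s ^ 3 * τ) : SucceedsWithin K P i (3 * J) := by
    have := h.succeedsWithin_of_le_pow_succ_mul hs hJ 2 i hR hD.le
    norm_num at this
    exact this
  intro N
  induction N with
  | zero => intro i hR hD; simpa using hfinal i hR (by simpa using hD)
  | succ N ih =>
    intro i hR hD
    by_cases hsmall : D i < s ^ 3 * τ
    · exact (hfinal i hR hsmall).mono (by nlinarith)
    obtain ⟨k, hK, hk⟩ := h.fast i hR (not_lt.1 hsmall)
    obtain ⟨hR', hdrop⟩ := h.restart i k hR hK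
    have hD' : D (i + 1) < s ^ (N + 3) * τ :=
      lt_of_mul_lt_mul_left (by rw [pow_succ] at hD; linarith) hs.le
    exact ((ih _ hR' hD').of_restart hK).mono (by push_cast; linarith)

theorem succeedsWithin_floor_two_mul_log
    (h : RestartEstimates K P R D (Real.sqrt (Real.exp 1)) τ CA J) (hCA : 0 ≤ CA) (hJ : 0 ≤ J)
    {i : ℕ} (hR : R i) {δ : ℝ} (hδ : 0 < δ) (hδτ : δ ≤ τ) (hD : 0 < D i) :
    SucceedsWithin K P i (⌊2 * Real.log (D i / δ)⌋₊ * CA + 3 * J) := by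
  have hs : 1 ≤ Real.sqrt (Real.exp 1) := Real.one_le_sqrt.2 (Real.one_le_exp zero_le_one)
  refine h.succeedsWithin_of_lt_pow_add_three_mul (by linarith) hCA hJ _ i hR ?_
  calc D i = D i / δ * δ := (div_mul_cancel₀ _ hδ.ne').symm
    _ < Real.sqrt (Real.exp 1) ^ (⌊2 * Real.log (D i / δ)⌋₊ + 1) * δ := by
      gcongr; exact lt_sqrt_exp_one_pow (by positivity)
    _ ≤ Real.sqrt (Real.exp 1) ^ (⌊2 * Real.log (D i / δ)⌋₊ + 3) * τ :=
      mul_le_mul (pow_le_pow_right₀ hs (by omega)) hδτ hδ.le (by positivity)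

end RestartEstimates

theorem two_stepsize_subgradient_complexity_general {n : ℕ} (Q : Set (EuclideanSpace ℝ (Fin n)))
    (hQcv : Convex ℝ Q)
    (f : EuclideanSpace ℝ (Fin n) → ℝ)
    (fstar : ℝ) (hattain : ∃ z ∈ Q, f z = fstar) (hmin : ∀ z ∈ Q, fstar ≤ f z)
    (fslb : ℝ) (hslb : fslb < fstar)
    (G M : ℝ)
    (hgrow : ∀ z ∈ Q, Metric.infDist z {w ∈ Q | f w = fstar} ≤ G * (f z - fslb))
    (ε' : ℝ) (hε' : 0 < ε')
    (B F εb' ε εb : ℝ)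
    (hB : B = (Real.sqrt (Real.exp 1))⁻¹) (hF : F = Real.sqrt (Real.exp 1))
    (hεb' : εb' = 0.9) (hε : ε = ε' / (1 + ε')) (hεb : εb = εb' / (1 + εb'))
    (x xb g gb : ℕ → ℕ → EuclideanSpace ℝ (Fin n)) (K : ℕ → ℕ∞)
    (x0 : EuclideanSpace ℝ (Fin n))
    (hx10 : x 1 0 = x0) (hxb10 : xb 1 0 = x0)
    (hmem : ∀ i j : ℕ, 1 ≤ i → (j : ℕ∞) ≤ K i → x i j ∈ Q ∧ xb i j ∈ Q)
    (hKlt : ∀ i j : ℕ, 1 ≤ i → (j : ℕ∞) < K i →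
      B ≤ (f (x i j) - fslb) / (f (x i 0) - fslb) ∧
      B ≤ (f (xb i j) - fslb) / (f (xb i 0) - fslb))
    (hsub : ∀ i j : ℕ, 1 ≤ i → (j : ℕ∞) < K i →
      (∀ w ∈ Q, f (x i j) + ⟪g i j, w - x i j⟫ ≤ f w) ∧
      (∀ w ∈ Q, f (xb i j) + ⟪gb i j, w - xb i j⟫ ≤ f w) ∧
      ‖g i j‖ ≤ M ∧ ‖gb i j‖ ≤ M)
    (hupd : ∀ i j : ℕ, 1 ≤ i → (j : ℕ∞) < K i →
      IsProj Q (x i j - (if g i j = 0 then 0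
          else ε * (f (x i 0) - fslb) / (F * ‖g i j‖ ^ 2)) • g i j) (x i (j + 1)) ∧
      IsProj Q (xb i j - (if gb i j = 0 then 0
          else εb * (f (xb i 0) - fslb) / (F * ‖gb i j‖ ^ 2)) • gb i j) (xb i (j + 1)))
    (hKeq : ∀ i j : ℕ, 1 ≤ i → K i = (j : ℕ∞) →
      ((f (x i j) - fslb) / (f (x i 0) - fslb) < B ∧
        x (i + 1) 0 = x i j ∧ xb (i + 1) 0 = x i j) ∨
      (B ≤ (f (x i j) - fslb) / (f (x i 0) - fslb) ∧
        (f (xb i j) - fslb) / (f (xb i 0) - fslb) < B ∧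
        x (i + 1) 0 = xb i j ∧ xb (i + 1) 0 = xb i j)) :
    ∃ i j : ℕ, 1 ≤ i ∧ (j : ℕ∞) ≤ K i ∧ (∀ i' : ℕ, 1 ≤ i' → i' < i → K i' ≠ ⊤) ∧
      (2 * ((∑ i' ∈ Finset.Icc 1 (i - 1), (K i').toNat) + j) : ℝ) ≤
        18 * M ^ 2 * G ^ 2 *
          (2.7 * Real.log (1 + (f x0 - fstar) / (fstar - fslb)) + ((1 + ε') / ε') ^ 2) ∧
      (f (x i j) - fstar) / (fstar - fslb) ≤ ε' := by
  subst hB hF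
  set s := Real.sqrt (Real.exp 1)
  set δ := fstar - fslb
  have hs : 0 < s := Real.sqrt_pos.2 (Real.exp_pos 1)
  have hs2 : s ^ 2 = Real.exp 1 := Real.sq_sqrt (Real.exp_pos 1).le
  have hδ : 0 < δ := sub_pos.2 hslb
  have hgap (i : ℕ) (hi : 1 ≤ i) : δ ≤ f (x i 0) - fslb := by
    linarith [hmin _ (hmem i 0 hi (by simp)).1]
  have hstep (i j : ℕ) (hi : 1 ≤ i) (hj : (j : ℕ∞) < K i) :
      IsSubgradientStep Q f M (ε * (f (x i 0) - fslb) / s) (x i j) (g i j) (x i (j + 1)) ∧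
      IsSubgradientStep Q f M (εb * (f (xb i 0) - fslb) / s) (xb i j) (gb i j) (xb i (j + 1)) :=
    have ⟨hgx, hgxb, hMx, hMxb⟩ := hsub i j hi hj
    ⟨isSubgradientStep_of_isProj hgx hMx (hupd i j hi hj).1,
      isSubgradientStep_of_isProj hgxb hMxb (hupd i j hi hj).2⟩
  have hest : RestartEstimates K (fun i j => f (x i j) - fstar ≤ ε' * δ)
      (fun i => 1 ≤ i ∧ x i 0 = xb i 0) (fun i => f (x i 0) - fslb) s ((1 + ε') * δ)
      (15 / 2 * M ^ 2 * G ^ 2) (Real.exp 1 * M ^ 2 * G ^ 2 * ((1 + ε') / ε') ^ 2) :=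
    { restart := fun i k ⟨hi, hsync⟩ hK => by
        have hD := hδ.trans_le (hgap i hi)
        obtain ⟨y, hlt, hx, hxb⟩ : ∃ y, (f y - fslb) / (f (x i 0) - fslb) < s⁻¹ ∧
            x (i + 1) 0 = y ∧ xb (i + 1) 0 = y := by
          rcases hKeq i k hi hK with ⟨hlt, hx, hxb⟩ | ⟨-, hlt, hx, hxb⟩
          exacts [⟨_, hlt, hx, hxb⟩, ⟨_, hsync ▸ hlt, hx, hxb⟩]
        rw [div_lt_iff₀ hD, inv_mul_eq_div, lt_div_iff₀' hs] at hlt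
        exact ⟨⟨by omega, hx.trans hxb.symm⟩, hx ▸ hlt⟩
      fast := fun i ⟨hi, hsync⟩ hD => innerLoop_length_le_of_pow_three_mul_le hQcv hattain
        hgrow (hmem i 0 hi (by simp)).2 (fun j hj => (hstep i j hi hj).2)
        (fun j hj => (hKlt i j hi hj).2) hs hs2 (by rw [hεb, hεb']; norm_num) hslb
        (by rw [← hsync]; nlinarith [pow_pos hs 3, mul_pos hε' hδ])
      far := fun i ⟨hi, _⟩ hD => innerLoop_length_le_of_mul_lt hQcv hattain hgrow
        (hmem i 0 hi (by simp)).1 (fun j hj => (hstep i j hi hj).1)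
        (fun j hj => (hKlt i j hi hj).1) hs hs2 hε' hε hslb (by linarith)
      near := fun i ⟨hi, _⟩ hD => innerLoop_hit_or_restart_of_le_mul hQcv hattain hgrow
        (hmem i 0 hi (by simp)).1 (fun j hj => (hstep i j hi hj).1) hs hs2 hε' hε
        (hδ.trans_le (hgap i hi)) (by linarith)
      done := fun i _ hD => by linarith }
  obtain ⟨i, j, hi, hj, hfin, hsum, hP⟩ := hest.succeedsWithin_floor_two_mul_log
    (by positivity) (by positivity) ⟨le_rfl, hx10.trans hxb10.symm⟩ hδ
    (le_mul_of_one_le_left hδ.le (by linarith)) (hδ.trans_le (hgap 1 le_rfl))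
  refine ⟨i, j, hi, hj, fun l hl hli => hfin l (Finset.mem_Ico.2 ⟨hl, hli⟩), ?_,
    (div_le_iff₀ hδ).2 hP⟩
  have hr : 1 + (f x0 - fstar) / δ = (f (x 1 0) - fslb) / δ := by
    rw [hx10]; field_simp; ring
  have hL : 0 ≤ Real.log ((f (x 1 0) - fslb) / δ) :=
    Real.log_nonneg ((one_le_div hδ).2 (hgap 1 le_rfl))
  rw [Finset.Icc_sub_one_right_eq_Ico_of_not_isMin (by simp; omega), hr]
  push_cast at hsum ⊢
  have hN := Nat.floor_le (by positivity : 0 ≤ 2 * Real.log ((f (x 1 0) - fslb) / δ))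
  have hMG : 0 ≤ M ^ 2 * G ^ 2 := by positivity
  nlinarith [mul_le_mul_of_nonneg_right hN hMG, mul_nonneg hL hMG, Real.exp_one_lt_three,
    mul_nonneg hMG (sq_nonneg ((1 + ε') / ε'))]

/-- Theorem: complexity bound for the Non-Smooth Method with Two Step-Size
Rules Running Simultaneously, Algorithm 3. -/
theorem two_stepsize_subgradient_complexity {n : ℕ} (Q : Set (EuclideanSpace ℝ (Fin n)))
    (hQne : Q.Nonempty) (hQcl : IsClosed Q) (hQcv : Convex ℝ Q)
    (f : EuclideanSpace ℝ (Fin n) → ℝ) (hfc : ConvexOn ℝ Q f)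
    (fstar : ℝ) (hattain : ∃ z ∈ Q, f z = fstar) (hmin : ∀ z ∈ Q, fstar ≤ f z)
    (fslb : ℝ) (hslb : fslb < fstar)
    (G M : ℝ) (hG : 0 < G)
    (hgrow : ∀ z ∈ Q, Metric.infDist z {w ∈ Q | f w = fstar} ≤ G * (f z - fslb))
    (ε' : ℝ) (hε' : 0 < ε')
    (B F εb' ε εb : ℝ)
    (hB : B = (Real.sqrt (Real.exp 1))⁻¹) (hF : F = Real.sqrt (Real.exp 1))
    (hεb' : εb' = 0.9) (hε : ε = ε' / (1 + ε')) (hεb : εb = εb' / (1 + εb'))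
    (x xb g gb : ℕ → ℕ → EuclideanSpace ℝ (Fin n)) (K : ℕ → ℕ∞)
    (x0 : EuclideanSpace ℝ (Fin n)) (hx0 : x0 ∈ Q)
    (hx10 : x 1 0 = x0) (hxb10 : xb 1 0 = x0)
    (hmem : ∀ i j : ℕ, 1 ≤ i → (j : ℕ∞) ≤ K i → x i j ∈ Q ∧ xb i j ∈ Q)
    (hKlt : ∀ i j : ℕ, 1 ≤ i → (j : ℕ∞) < K i →
      B ≤ (f (x i j) - fslb) / (f (x i 0) - fslb) ∧
      B ≤ (f (xb i j) - fslb) / (f (xb i 0) - fslb))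
    (hsub : ∀ i j : ℕ, 1 ≤ i → (j : ℕ∞) < K i →
      (∀ w ∈ Q, f (x i j) + ⟪g i j, w - x i j⟫ ≤ f w) ∧
      (∀ w ∈ Q, f (xb i j) + ⟪gb i j, w - xb i j⟫ ≤ f w) ∧
      ‖g i j‖ ≤ M ∧ ‖gb i j‖ ≤ M)
    (hupd : ∀ i j : ℕ, 1 ≤ i → (j : ℕ∞) < K i →
      IsProj Q (x i j - (if g i j = 0 then 0
          else ε * (f (x i 0) - fslb) / (F * ‖g i j‖ ^ 2)) • g i j) (x i (j + 1)) ∧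
      IsProj Q (xb i j - (if gb i j = 0 then 0
          else εb * (f (xb i 0) - fslb) / (F * ‖gb i j‖ ^ 2)) • gb i j) (xb i (j + 1)))
    (hKeq : ∀ i j : ℕ, 1 ≤ i → K i = (j : ℕ∞) →
      ((f (x i j) - fslb) / (f (x i 0) - fslb) < B ∧
        x (i + 1) 0 = x i j ∧ xb (i + 1) 0 = x i j) ∨
      (B ≤ (f (x i j) - fslb) / (f (x i 0) - fslb) ∧
        (f (xb i j) - fslb) / (f (xb i 0) - fslb) < B ∧
        x (i + 1) 0 = xb i j ∧ xb (i + 1) 0 = xb i j)) :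
    ∃ i j : ℕ, 1 ≤ i ∧ (j : ℕ∞) ≤ K i ∧ (∀ i' : ℕ, 1 ≤ i' → i' < i → K i' ≠ ⊤) ∧
      (2 * ((∑ i' ∈ Finset.Icc 1 (i - 1), (K i').toNat) + j) : ℝ) ≤
        18 * M ^ 2 * G ^ 2 *
          (2.7 * Real.log (1 + (f x0 - fstar) / (fstar - fslb)) + ((1 + ε') / ε') ^ 2) ∧
      (f (x i j) - fstar) / (fstar - fslb) ≤ ε' :=
  two_stepsize_subgradient_complexity_general Q hQcv f fstar hattain hmin fslb hslb G M hgrow ε' hε'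
    B F εb' ε εb hB hF hεb' hε hεb x xb g gb K x0 hx10 hxb10 hmem hKlt hsub hupd hKeq
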